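/- Let X and Y be trees, p ∈ R(X) and q ∈ R(Y). Suppose there exist an edge l_p of X containing p with l_p ∩ E(X) ≠ ∅, and an edge l_q of Y containing q with l_q ∩ E(Y) ≠ ∅, such that C(p, (X \ l_p) ∪ {p}) is homeomorphic to C(q, (Y \ l_q) ∪ {q}). Then C(p,X) is homeomorphic to C(q,Y). -/

import Mathlib

open Set Topology TopologicalSpace

universe u

/-- `IndDimLE m α t` means that the small inductive dimension of `α` is at most `m - 1`.
In particular `IndDimLE 0 α t` means `α` is empty (dimension `-1`). -/
def IndDimLE : ℕ → (α : Type u) → TopologicalSpace α → Prop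
  | 0, α, _ => IsEmpty α
  | n + 1, α, t =>
      ∀ (x : α) (U : Set α), @IsOpen α t U → x ∈ U →
        ∃ V : Set α, @IsOpen α t V ∧ x ∈ V ∧ V ⊆ U ∧
          IndDimLE n (↥(@frontier α t V))
            (TopologicalSpace.induced (Subtype.val : ↥(@frontier α t V) → α) t)

/-- The small inductive dimension of a topological space, as an integer
(with junk value if the dimension is infinite). -/
noncomputable def indDim (α : Type u) [t : TopologicalSpace α] : ℤ :=
  sInf {d : ℤ | ∃ m : ℕ, d = (m : ℤ) - 1 ∧ IndDimLE m α t}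

section Defs

variable {X : Type u} [TopologicalSpace X]

/-- `A` is an arc, i.e. homeomorphic to `[0,1]`. -/
def IsArcSet (A : Set X) : Prop :=
  Nonempty (↥A ≃ₜ ↥(Icc (0 : ℝ) 1))

/-- `A` is an arc with end points `a` and `b`. -/
def IsArcFromTo (A : Set X) (a b : X) : Prop :=
  ∃ h : ↥(Icc (0 : ℝ) 1) ≃ₜ ↥A,
    ((h ⟨0, by norm_num⟩ : ↥A) : X) = a ∧ ((h ⟨1, by norm_num⟩ : ↥A) : X) = b

/-- `a` is an end point of the arc `A`. -/
def IsArcEndpoint (A : Set X) (a : X) : Prop := ∃ b, IsArcFromTo A a b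

/-- The points of the arc `A` which are not end points of `A`. -/
def arcInterior (A : Set X) : Set X := {x ∈ A | ¬ IsArcEndpoint A x}

/-- `N` is a simple `n`-od with vertex `v`: the union of `n` arcs emanating from `v`
and otherwise disjoint from each other. -/
def IsSimpleNod (n : ℕ) (N : Set X) (v : X) : Prop :=
  0 < n ∧ ∃ A : Fin n → Set X, (∀ i, IsArcSet (A i)) ∧ (⋃ i, A i) = N ∧
    (∀ i, IsArcEndpoint (A i) v) ∧ ∀ i j, i ≠ j → A i ∩ A j = {v}

/-- `x` has order `n` in the subspace `S`: `x` has a closed neighborhood in `S`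
which is a simple `n`-od having `x` as the vertex. -/
def HasOrdIn (S : Set X) (x : X) (n : ℕ) : Prop :=
  ∃ N : Set X, N ⊆ S ∧ IsClosed N ∧ (∃ U : Set X, IsOpen U ∧ x ∈ U ∧ U ∩ S ⊆ N) ∧
    IsSimpleNod n N x

/-- The order of `x` in the subspace `S`. -/
noncomputable def ordIn (S : Set X) (x : X) : ℕ := sInf {n | HasOrdIn S x n}

/-- End points (order `1`) of the subspace `S`. -/
def endPtsIn (S : Set X) : Set X := {x ∈ S | HasOrdIn S x 1}

/-- Ordinary points (order `2`) of the subspace `S`. -/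
def ordinaryIn (S : Set X) : Set X := {x ∈ S | HasOrdIn S x 2}

/-- Ramification points (order `≥ 3`) of the subspace `S`. -/
def ramifIn (S : Set X) : Set X := {x ∈ S | ∃ n, 3 ≤ n ∧ HasOrdIn S x n}

/-- Vertices (points of order `≠ 2`) of the subspace `S`. -/
def verticesIn (S : Set X) : Set X := {x ∈ S | ¬ HasOrdIn S x 2}

/-- `e` is an edge of the subspace `S`: an arc joining two vertices of `S` and
containing no more than two vertices of `S`. -/
def IsEdgeIn (S : Set X) (e : Set X) : Prop :=
  e ⊆ S ∧ ∃ a b, a ∈ verticesIn S ∧ b ∈ verticesIn S ∧ IsArcFromTo e a b ∧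
    e ∩ verticesIn S ⊆ {a, b}

/-- `S` is a simple closed curve. -/
def IsSimpleClosedCurve (S : Set X) : Prop := Nonempty (↥S ≃ₜ Circle)

end Defs

/-- `X` is an arc (as a space). -/
def IsArcSpace (X : Type u) [TopologicalSpace X] : Prop :=
  Nonempty (X ≃ₜ ↥(Icc (0 : ℝ) 1))

/-- `X` is a finite graph: a continuum which is the union of finitely many arcs, any two
of which are either disjoint or intersect only in one or both of their end points. -/
def IsFiniteGraph (X : Type u) [MetricSpace X] : Prop :=
  CompactSpace X ∧ ConnectedSpace X ∧ Nonempty X ∧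
    ∃ 𝒜 : Finset (Set X), (∀ A ∈ 𝒜, IsArcSet A) ∧ ⋃₀ (𝒜 : Set (Set X)) = univ ∧
      ∀ A ∈ 𝒜, ∀ B ∈ 𝒜, A ≠ B → ∀ x ∈ A ∩ B, IsArcEndpoint A x ∧ IsArcEndpoint B x

/-- `X` is a tree: a finite graph without simple closed curves. -/
def IsTree (X : Type u) [MetricSpace X] : Prop :=
  IsFiniteGraph X ∧ ∀ S : Set X, ¬ IsSimpleClosedCurve S

/-- `X` is neither an arc nor a simple `n`-od. -/
def NotArcNotNod (X : Type u) [MetricSpace X] : Prop :=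
  ¬ IsArcSpace X ∧ ∀ (n : ℕ) (v : X), ¬ IsSimpleNod n (univ : Set X) v

/-- `T(X)`: the union of all edges of `X` disjoint from the set of end points of `X`. -/
def Tpart (X : Type u) [MetricSpace X] : Set X :=
  ⋃₀ {e : Set X | IsEdgeIn (univ : Set X) e ∧ e ∩ endPtsIn (univ : Set X) = ∅}

/-- `Sub_p(T(X))`: subtrees of `T(X)` containing `p` (subcontinua of `T(X)` all of whose
edges are edges of `X`). -/
def SubTreesP (X : Type u) [MetricSpace X] (p : X) : Set (Set X) :=
  {Y | Y ⊆ Tpart X ∧ p ∈ Y ∧ IsCompact Y ∧ IsConnected Y ∧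
    ∀ e : Set X, IsEdgeIn Y e → IsEdgeIn (univ : Set X) e}

/-- Subtrees of the tree `X`. -/
def Subtrees (X : Type u) [MetricSpace X] : Set (Set X) :=
  {Y | IsCompact Y ∧ IsConnected Y ∧
    ∀ e : Set X, IsEdgeIn Y e → IsEdgeIn (univ : Set X) e}

/-- The smallest subtree of `X` containing `a` and `b`. -/
def treeHull (X : Type u) [MetricSpace X] (a b : X) : Set X :=
  ⋂₀ {Y | Y ∈ Subtrees X ∧ a ∈ Y ∧ b ∈ Y}

/-- The hyperspace `C(p,X)` of subcontinua of `X` containing `p`,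
with the Hausdorff metric. -/
def CP (X : Type u) [MetricSpace X] (p : X) : Type u :=
  {A : NonemptyCompacts X // IsConnected (A : Set X) ∧ p ∈ (A : Set X)}

noncomputable instance (X : Type u) [MetricSpace X] (p : X) : MetricSpace (CP X p) :=
  inferInstanceAs (MetricSpace
    {A : NonemptyCompacts X // IsConnected (A : Set X) ∧ p ∈ (A : Set X)})

/-- The underlying subset of `X` of an element of `C(p,X)`. -/
def CP.set {X : Type u} [MetricSpace X] {p : X} (A : CP X p) : Set X := (A.1 : Set X)

/-- `U_n(X)`: elements of `C(p,X)` having a neighborhood in `C(p,X)` homeomorphic to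
the `n`-cell `[0,1]^n`. -/
def Un (X : Type u) [MetricSpace X] (p : X) (n : ℕ) : Set (CP X p) :=
  {A | ∃ N : Set (CP X p), N ∈ 𝓝 A ∧ Nonempty (↥N ≃ₜ (Fin n → ↥(Icc (0 : ℝ) 1)))}

/-- `𝒰(X) = ⋃ₙ U_n(X)`. -/
def UnionUn (X : Type u) [MetricSpace X] (p : X) : Set (CP X p) := ⋃ n : ℕ, Un X p n

/-- The edges of `X` which are not edges of `Y` and intersect `Y`. -/
def incidentE (X : Type u) [MetricSpace X] (Y : Set X) : Set (Set X) :=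
  {e | IsEdgeIn (univ : Set X) e ∧ ¬ IsEdgeIn Y e ∧ (e ∩ Y).Nonempty}

/-- `U_Y`: elements of `C(p,X)` of the form `Y` together with exactly one interior point
of each edge of `X` incident on `Y`. -/
def UofY (X : Type u) [MetricSpace X] (p : X) (Y : Set X) : Set (CP X p) :=
  {B | ∃ f : ↥(incidentE X Y) → X,
    (∀ e : ↥(incidentE X Y), f e ∈ arcInterior (e : Set X)) ∧ B.set = Y ∪ range f}

/-- `(X,p)` has unique hyperspace `C(p,X)` in the class of trees. -/
def UniqueHyperspaceInTrees (X : Type u) [MetricSpace X] (p : X) : Prop :=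
  ∀ (Y : Type u) [MetricSpace Y], IsTree Y → ∀ q : Y,
    Nonempty (CP X p ≃ₜ CP Y q) → ∃ 𝔥 : X ≃ₜ Y, 𝔥 p = q
section ArcTools

open Metric

abbrev I01 : Type := ↥(Icc (0:ℝ) 1)

noncomputable instance : CompactSpace I01 := isCompact_iff_compactSpace.mp isCompact_Icc

variable {X : Type u} [MetricSpace X]

lemma preconn_val_mem {s : Set ℝ} (hs : s.OrdConnected) :
    IsPreconnected {r : I01 | (r : ℝ) ∈ s} := by
  have h := (Topology.IsInducing.subtypeVal (t := Icc (0:ℝ) 1)).isPreconnected_image (s := {r : I01 | (r : ℝ) ∈ s})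
  refine h.mp ?_
  have him : Subtype.val '' {r : I01 | (r : ℝ) ∈ s} = Icc (0:ℝ) 1 ∩ s := by
    ext x
    constructor
    · rintro ⟨r, hr, rfl⟩; exact ⟨r.2, hr⟩
    · rintro ⟨hx, hxs⟩; exact ⟨⟨x, hx⟩, hxs, rfl⟩
  rw [him]
  exact isPreconnected_iff_ordConnected.mpr (Set.ordConnected_Icc.inter hs)

lemma isCompact_val_mem_of_isClosed {s : Set ℝ} (hs : IsClosed s) :
    IsCompact {r : I01 | (r : ℝ) ∈ s} :=
  (hs.preimage continuous_subtype_val).isCompact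

/-- An endpoint parametrization of an arc. -/
lemma arcFromTo_param {A : Set X} {a b : X} (h : IsArcFromTo A a b) :
    ∃ f : I01 → X, Continuous f ∧ Function.Injective f ∧ range f = A ∧
      f ⟨0, by norm_num⟩ = a ∧ f ⟨1, by norm_num⟩ = b := by
  obtain ⟨h, h0, h1⟩ := h
  refine ⟨fun r => (h r : X), continuous_subtype_val.comp h.continuous,
    fun r r' hrr' => h.injective (Subtype.val_injective hrr'), ?_, h0, h1⟩
  have : range (fun r => (h r : X)) = Subtype.val '' (range h) := by
    rw [← Set.range_comp]; rfl
  rw [this, h.surjective.range_eq, Set.image_univ, Subtype.range_coe]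

lemma arcEndpoint_param {A : Set X} {a : X} (h : IsArcEndpoint A a) :
    ∃ f : I01 → X, Continuous f ∧ Function.Injective f ∧ range f = A ∧
      f ⟨0, by norm_num⟩ = a := by
  obtain ⟨b, hb⟩ := h
  obtain ⟨f, hc, hi, hr, h0, _⟩ := arcFromTo_param hb
  exact ⟨f, hc, hi, hr, h0⟩

lemma exists_delta_image_subset {f : I01 → X} (hf : Continuous f) {U : Set X} (hU : IsOpen U)
    {t0 : I01} (ht0 : f t0 ∈ U) :
    ∃ δ > 0, ∀ r : I01, |(r : ℝ) - (t0 : ℝ)| ≤ δ → f r ∈ U := by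
  rcases Metric.isOpen_iff.mp (hU.preimage hf) t0 ht0 with ⟨ε, hε, hball⟩
  refine ⟨ε / 2, half_pos hε, fun r hr => ?_⟩
  apply hball
  rw [Metric.mem_ball, Subtype.dist_eq, Real.dist_eq]
  linarith

end ArcTools

section ArcTools2

open Metric

variable {X : Type u} [MetricSpace X]

lemma side_interval {f : I01 → X} (hf : Continuous f) (hinj : Function.Injective f)
    {S : Set X} (hSr : S ⊆ range f) (hSc : IsCompact S) (hSp : IsPreconnected S)
    {t0 : I01} (hxS : f t0 ∈ S) (hSd : IsPreconnected (S \ {f t0}))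
    (hSne : ∃ y ∈ S, y ≠ f t0) :
    (∃ w, (t0:ℝ) < w ∧ Icc (t0:ℝ) w ⊆ Subtype.val '' (f ⁻¹' S)) ∨
      (∃ w, w < (t0:ℝ) ∧ Icc w (t0:ℝ) ⊆ Subtype.val '' (f ⁻¹' S)) := by
  have hemb := hf.isClosedEmbedding hinj
  set P : Set ℝ := Subtype.val '' (f ⁻¹' S) with hPdef
  have hPre : f '' (f ⁻¹' S) = S := Set.image_preimage_eq_of_subset hSr
  have hpre_conn : IsPreconnected (f ⁻¹' S) :=
    hemb.isInducing.isPreconnected_image.mp (by rw [hPre]; exact hSp)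
  have hPconn : IsPreconnected P := hpre_conn.image _ continuous_subtype_val.continuousOn
  have hPcpt : IsCompact P := ((hSc.isClosed.preimage hf).isCompact).image continuous_subtype_val
  have h0P : (t0:ℝ) ∈ P := ⟨t0, hxS, rfl⟩
  have hPne : P.Nonempty := ⟨_, h0P⟩
  have hbdA : BddAbove P := hPcpt.bddAbove
  have hbdB : BddBelow P := hPcpt.bddBelow
  have hu : sInf P ∈ P := hPcpt.isClosed.csInf_mem hPne hbdB
  have hv : sSup P ∈ P := hPcpt.isClosed.csSup_mem hPne hbdA
  have hPIcc : P = Icc (sInf P) (sSup P) := by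
    apply subset_antisymm
    · exact fun x hx => ⟨csInf_le hbdB hx, le_csSup hbdA hx⟩
    · exact hPconn.Icc_subset hu hv
  by_cases hcase : (t0:ℝ) = sInf P
  · left
    refine ⟨sSup P, ?_, ?_⟩
    · rcases lt_or_eq_of_le (le_csSup hbdA h0P) with h | h
      · exact h
      · exfalso
        obtain ⟨y, hyS, hyne⟩ := hSne
        obtain ⟨ry, hry⟩ := hSr hyS
        have hryP : (ry:ℝ) ∈ P := ⟨ry, by rw [Set.mem_preimage, hry]; exact hyS, rfl⟩
        have h1 : (ry:ℝ) = sInf P := by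
          have hle : (ry:ℝ) ≤ sInf P := by rw [← hcase, h]; exact le_csSup hbdA hryP
          exact le_antisymm hle (csInf_le hbdB hryP)
        have h2 : ry = t0 := Subtype.ext (by rw [h1]; exact hcase.symm)
        exact hyne (by rw [← hry, h2])
    · rw [hcase, ← hPIcc]
  · by_cases hcase2 : (t0:ℝ) = sSup P
    · right
      refine ⟨sInf P, lt_of_le_of_ne (csInf_le hbdB h0P) (fun h => hcase h.symm), ?_⟩
      rw [hcase2, ← hPIcc]
    · exfalso
      have hlt1 : sInf P < (t0:ℝ) := lt_of_le_of_ne (csInf_le hbdB h0P) (fun h => hcase h.symm)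
      have hlt2 : (t0:ℝ) < sSup P := lt_of_le_of_ne (le_csSup hbdA h0P) hcase2
      have hfib : f ⁻¹' {f t0} = {t0} := by
        ext r; simp [hinj.eq_iff]
      have hdiff : P \ {(t0:ℝ)} = Subtype.val '' (f ⁻¹' (S \ {f t0})) := by
        rw [Set.preimage_diff, hfib, Set.image_diff Subtype.val_injective, Set.image_singleton]
      have hdconn : IsPreconnected (P \ {(t0:ℝ)}) := by
        rw [hdiff]
        refine IsPreconnected.image ?_ _ continuous_subtype_val.continuousOn
        refine hemb.isInducing.isPreconnected_image.mp ?_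
        rw [Set.image_preimage_eq_of_subset (fun z hz => hSr hz.1)]
        exact hSd
      have humem : sInf P ∈ P \ {(t0:ℝ)} := ⟨hu, fun h => hcase (Set.mem_singleton_iff.mp h).symm⟩
      have hvmem : sSup P ∈ P \ {(t0:ℝ)} := ⟨hv, fun h => hcase2 (Set.mem_singleton_iff.mp h).symm⟩
      have : (t0:ℝ) ∈ P \ {(t0:ℝ)} := hdconn.Icc_subset humem hvmem ⟨hlt1.le, hlt2.le⟩
      exact this.2 rfl

lemma overlap_contra {f : I01 → X} (hinj : Function.Injective f)
    {S T : Set X} {x : X} (hST : S ∩ T ⊆ {x}) {a b : ℝ} (hab : a < b)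
    (hS : Icc a b ⊆ Subtype.val '' (f ⁻¹' S)) (hT : Icc a b ⊆ Subtype.val '' (f ⁻¹' T)) :
    False := by
  have key : ∀ c ∈ Icc a b, f ⁻¹' S ∩ f ⁻¹' T ∩ {r : I01 | (r:ℝ) = c} ≠ ∅ := by
    intro c hc
    obtain ⟨r, hr, hrv⟩ := hS hc
    obtain ⟨r', hr', hrv'⟩ := hT hc
    have hrr : r' = r := Subtype.ext (hrv'.trans hrv.symm)
    rw [hrr] at hr'
    exact fun hemp => (Set.eq_empty_iff_forall_notMem.mp hemp r) ⟨⟨hr, hr'⟩, hrv⟩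
  have ha := key a (Set.left_mem_Icc.mpr hab.le)
  have hb := key b (Set.right_mem_Icc.mpr hab.le)
  rw [← Set.nonempty_iff_ne_empty] at ha hb
  obtain ⟨ra, ⟨hraS, hraT⟩, hrav⟩ := ha
  obtain ⟨rb, ⟨hrbS, hrbT⟩, hrbv⟩ := hb
  have hfa : f ra = x := hST ⟨hraS, hraT⟩
  have hfb : f rb = x := hST ⟨hrbS, hrbT⟩
  have : ra = rb := hinj (hfa.trans hfb.symm)
  rw [this] at hrav
  exact absurd (hrav.symm.trans hrbv) hab.ne

lemma same_side_up_contra {f : I01 → X} (hinj : Function.Injective f)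
    {S T : Set X} {x : X} (hST : S ∩ T ⊆ {x}) {c w1 w2 : ℝ} (h1 : c < w1) (h2 : c < w2)
    (hS : Icc c w1 ⊆ Subtype.val '' (f ⁻¹' S)) (hT : Icc c w2 ⊆ Subtype.val '' (f ⁻¹' T)) :
    False :=
  overlap_contra hinj hST (lt_min h1 h2)
    ((Set.Icc_subset_Icc_right (min_le_left _ _)).trans hS)
    ((Set.Icc_subset_Icc_right (min_le_right _ _)).trans hT)

lemma same_side_down_contra {f : I01 → X} (hinj : Function.Injective f)
    {S T : Set X} {x : X} (hST : S ∩ T ⊆ {x}) {c w1 w2 : ℝ} (h1 : w1 < c) (h2 : w2 < c)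
    (hS : Icc w1 c ⊆ Subtype.val '' (f ⁻¹' S)) (hT : Icc w2 c ⊆ Subtype.val '' (f ⁻¹' T)) :
    False :=
  overlap_contra hinj hST (max_lt h1 h2)
    ((Set.Icc_subset_Icc_left (le_max_left _ _)).trans hS)
    ((Set.Icc_subset_Icc_left (le_max_right _ _)).trans hT)

end ArcTools2

section Nods

open Metric

set_option linter.unusedSectionVars false

variable {X : Type u} [MetricSpace X]

lemma arm_segment {A : Set X} {x : X} (hA : IsArcEndpoint A x) {U : Set X} (hU : IsOpen U)
    (hxU : x ∈ U) :
    ∃ S : Set X, IsCompact S ∧ IsPreconnected S ∧ S ⊆ U ∩ A ∧ x ∈ S ∧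
      (∃ y ∈ S, y ≠ x) ∧ IsPreconnected (S \ {x}) := by
  obtain ⟨g, hgc, hgi, hgr, hg0⟩ := arcEndpoint_param hA
  obtain ⟨δ, hδ, hδU⟩ := exists_delta_image_subset hgc hU (by rw [hg0]; exact hxU)
  set m := min δ 1 with hm
  have hm0 : 0 < m := lt_min hδ one_pos
  have hm1 : m ≤ 1 := min_le_right _ _
  have hmδ : m ≤ δ := min_le_left _ _
  refine ⟨g '' {r : I01 | (r:ℝ) ∈ Iic m}, ?_, ?_, ?_, ?_, ?_, ?_⟩
  · exact (isCompact_val_mem_of_isClosed isClosed_Iic).image hgc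
  · exact (preconn_val_mem Set.ordConnected_Iic).image _ hgc.continuousOn
  · rintro y ⟨r, hr, rfl⟩
    refine ⟨hδU r ?_, by rw [← hgr]; exact Set.mem_range_self r⟩
    show |(r:ℝ) - 0| ≤ δ
    rw [sub_zero, abs_of_nonneg r.2.1]
    exact le_trans hr hmδ
  · exact ⟨⟨0, by norm_num⟩, by show (0:ℝ) ≤ m; exact hm0.le, hg0⟩
  · refine ⟨g ⟨m, ⟨hm0.le, hm1⟩⟩, ⟨_, by show m ≤ m; exact le_rfl, rfl⟩, ?_⟩
    rw [← hg0]
    intro h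
    have h2 := hgi h
    rw [Subtype.ext_iff] at h2
    exact hm0.ne' (by simpa using h2)
  · have hdom : ({r : I01 | (r:ℝ) ∈ Iic m} \ {(⟨0, by norm_num⟩ : I01)}) =
        {r : I01 | (r:ℝ) ∈ Ioc 0 m} := by
      ext r
      simp only [Set.mem_diff, Set.mem_setOf_eq, Set.mem_Iic, Set.mem_singleton_iff, Set.mem_Ioc]
      constructor
      · rintro ⟨h1, h2⟩
        refine ⟨?_, h1⟩
        rcases lt_or_eq_of_le r.2.1 with h | h
        · exact h
        · exact absurd (Subtype.ext h.symm) h2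
      · rintro ⟨h1, h2⟩
        refine ⟨h2, fun he => ?_⟩
        rw [he] at h1
        simp at h1
    have himg : g '' {r : I01 | (r:ℝ) ∈ Iic m} \ {x} = g '' {r : I01 | (r:ℝ) ∈ Ioc 0 m} := by
      rw [← hg0, ← Set.image_singleton (f := g), ← Set.image_diff hgi, hdom]
    rw [himg]
    exact (preconn_val_mem Set.ordConnected_Ioc).image _ hgc.continuousOn

lemma nod1_param {N : Set X} {x : X} (h : IsSimpleNod 1 N x) :
    ∃ f : I01 → X, Continuous f ∧ Function.Injective f ∧ range f = N ∧
      f ⟨0, by norm_num⟩ = x := by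
  obtain ⟨-, A, _, hAU, hAe, -⟩ := h
  have hN : A 0 = N := by
    rw [← hAU]
    apply subset_antisymm (Set.subset_iUnion A 0)
    exact Set.iUnion_subset (fun i => by rw [Subsingleton.elim i 0])
  obtain ⟨f, hc, hi, hr, h0⟩ := arcEndpoint_param (hAe 0)
  exact ⟨f, hc, hi, by rw [hr, hN], h0⟩

lemma nod2_param {N : Set X} {x : X} (h : IsSimpleNod 2 N x) :
    ∃ f : I01 → X, Continuous f ∧ Function.Injective f ∧ range f = N ∧
      f ⟨1/2, by norm_num⟩ = x := by
  obtain ⟨-, A, _, hAU, hAe, hAI⟩ := h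
  have hN : N = A 0 ∪ A 1 := by
    rw [← hAU]
    ext z
    simp [Set.mem_iUnion, Fin.exists_fin_two]
  obtain ⟨g0, hc0, hi0, hr0, he0⟩ := arcEndpoint_param (hAe 0)
  obtain ⟨g1, hc1, hi1, hr1, he1⟩ := arcEndpoint_param (hAe 1)
  have h01 : A 0 ∩ A 1 = {x} := hAI 0 1 (by decide)
  set φ : ℝ → I01 := fun t =>
    ⟨max 0 (min 1 t), ⟨le_max_left _ _, max_le zero_le_one (min_le_left _ _)⟩⟩ with hφ
  have hφc : Continuous φ :=
    Continuous.subtype_mk (continuous_const.max (continuous_const.min continuous_id)) _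
  have hφid : ∀ t : ℝ, 0 ≤ t → t ≤ 1 → ((φ t : ℝ)) = t := by
    intro t h0 h1
    show max 0 (min 1 t) = t
    rw [min_eq_right h1, max_eq_right h0]
  have hφ0 : φ 0 = ⟨0, by norm_num⟩ := Subtype.ext (by show max 0 (min 1 0) = 0; norm_num)
  have hg0mem : ∀ z, g0 z ∈ A 0 := fun z => by rw [← hr0]; exact Set.mem_range_self z
  have hg1mem : ∀ z, g1 z ∈ A 1 := fun z => by rw [← hr1]; exact Set.mem_range_self z
  refine ⟨fun r => if (r:ℝ) ≤ 1/2 then g0 (φ (1 - 2*(r:ℝ))) else g1 (φ (2*(r:ℝ) - 1)),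
    ?_, ?_, ?_, ?_⟩
  · apply Continuous.if_le
    · exact hc0.comp (hφc.comp (continuous_const.sub (continuous_const.mul continuous_subtype_val)))
    · exact hc1.comp (hφc.comp ((continuous_const.mul continuous_subtype_val).sub continuous_const))
    · exact continuous_subtype_val
    · exact continuous_const
    · intro r hr
      rw [hr, show (1:ℝ) - 2*(1/2) = 0 by norm_num, show (2:ℝ)*(1/2) - 1 = 0 by norm_num,
        hφ0, he0, he1]
  · intro r r' hrr'
    beta_reduce at hrr'
    by_cases hr : (r:ℝ) ≤ 1/2 <;> by_cases hr' : (r':ℝ) ≤ 1/2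
    · rw [if_pos hr, if_pos hr'] at hrr'
      have h2 := hi0 hrr'
      rw [Subtype.ext_iff] at h2
      rw [hφid _ (by linarith) (by linarith [r.2.1]),
        hφid _ (by linarith) (by linarith [r'.2.1])] at h2
      exact Subtype.ext (by linarith)
    · exfalso
      push_neg at hr'
      rw [if_pos hr, if_neg (not_le.mpr hr')] at hrr'
      have hmem : g1 (φ (2*(r':ℝ) - 1)) ∈ A 0 ∩ A 1 :=
        ⟨by rw [← hrr']; exact hg0mem _, hg1mem _⟩
      rw [h01] at hmem
      have h2 : φ (2*(r':ℝ) - 1) = ⟨0, by norm_num⟩ := by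
        apply hi1
        rw [he1]
        exact hmem
      rw [Subtype.ext_iff, hφid _ (by linarith) (by linarith [r'.2.2])] at h2
      norm_num at h2
      linarith
    · exfalso
      push_neg at hr
      rw [if_neg (not_le.mpr hr), if_pos hr'] at hrr'
      have hmem : g1 (φ (2*(r:ℝ) - 1)) ∈ A 0 ∩ A 1 :=
        ⟨by rw [hrr']; exact hg0mem _, hg1mem _⟩
      rw [h01] at hmem
      have h2 : φ (2*(r:ℝ) - 1) = ⟨0, by norm_num⟩ := by
        apply hi1
        rw [he1]
        exact hmem
      rw [Subtype.ext_iff, hφid _ (by linarith) (by linarith [r.2.2])] at h2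
      norm_num at h2
      linarith
    · rw [if_neg hr, if_neg hr'] at hrr'
      push_neg at hr hr'
      have h2 := hi1 hrr'
      rw [Subtype.ext_iff] at h2
      rw [hφid _ (by linarith) (by linarith [r.2.2]),
        hφid _ (by linarith) (by linarith [r'.2.2])] at h2
      exact Subtype.ext (by linarith)
  · apply subset_antisymm
    · rintro y ⟨r, rfl⟩
      beta_reduce
      by_cases hr : (r:ℝ) ≤ 1/2
      · rw [if_pos hr, hN]; exact Or.inl (hg0mem _)
      · rw [if_neg hr, hN]; exact Or.inr (hg1mem _)
    · rw [hN]
      rintro y (hy | hy)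
      · rw [← hr0] at hy
        obtain ⟨s, rfl⟩ := hy
        refine ⟨⟨(1 - (s:ℝ))/2, ⟨by linarith [s.2.2], by linarith [s.2.1]⟩⟩, ?_⟩
        show (if ((1 - (s:ℝ))/2 : ℝ) ≤ 1/2 then g0 (φ (1 - 2*((1 - (s:ℝ))/2)))
          else g1 (φ (2*((1 - (s:ℝ))/2) - 1))) = g0 s
        rw [if_pos (by linarith [s.2.1])]
        rw [show (1:ℝ) - 2*((1 - (s:ℝ))/2) = (s:ℝ) by ring]
        congr 1
        exact Subtype.ext (hφid _ s.2.1 s.2.2)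
      · rw [← hr1] at hy
        obtain ⟨s, rfl⟩ := hy
        by_cases hs : (s:ℝ) = 0
        · refine ⟨⟨1/2, by norm_num⟩, ?_⟩
          show (if (1/2 : ℝ) ≤ 1/2 then g0 (φ (1 - 2*(1/2:ℝ)))
            else g1 (φ (2*(1/2:ℝ) - 1))) = g1 s
          rw [if_pos le_rfl, show (1:ℝ) - 2*(1/2) = 0 by norm_num, hφ0, he0, ← he1]
          congr 1
          exact (Subtype.ext hs).symm
        · have hs0 : 0 < (s:ℝ) := lt_of_le_of_ne s.2.1 (Ne.symm hs)
          refine ⟨⟨((s:ℝ) + 1)/2, ⟨by linarith [s.2.1], by linarith [s.2.2]⟩⟩, ?_⟩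
          show (if (((s:ℝ) + 1)/2 : ℝ) ≤ 1/2 then g0 (φ (1 - 2*(((s:ℝ) + 1)/2)))
            else g1 (φ (2*(((s:ℝ) + 1)/2) - 1))) = g1 s
          rw [if_neg (by push_neg; linarith)]
          rw [show (2:ℝ)*(((s:ℝ) + 1)/2) - 1 = (s:ℝ) by ring]
          congr 1
          exact Subtype.ext (hφid _ s.2.1 s.2.2)
  · show (if ((1:ℝ)/2) ≤ 1/2 then g0 (φ (1 - 2*(1/2:ℝ))) else g1 (φ (2*(1/2:ℝ) - 1))) = x
    rw [if_pos le_rfl, show (1:ℝ) - 2*(1/2) = 0 by norm_num, hφ0, he0]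

lemma hasOrdIn_one_conflict {x : X} (h1 : HasOrdIn (univ : Set X) x 1) {m : ℕ} (hm : 2 ≤ m)
    (h2 : HasOrdIn (univ : Set X) x m) : False := by
  obtain ⟨N, -, -, ⟨U, hUo, hxU, hUN⟩, hnod⟩ := h1
  rw [Set.inter_univ] at hUN
  obtain ⟨f, hfc, hfi, hfr, hf0⟩ := nod1_param hnod
  obtain ⟨N2, -, -, -, -, A, -, -, hAe, hAI⟩ := h2
  set i0 : Fin m := ⟨0, by omega⟩
  set i1 : Fin m := ⟨1, by omega⟩
  have hi01 : i0 ≠ i1 := by simp [i0, i1, Fin.ext_iff]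
  obtain ⟨S0, hS0c, hS0p, hS0sub, hxS0, hS0ne, hS0d⟩ := arm_segment (hAe i0) hUo hxU
  obtain ⟨S1, hS1c, hS1p, hS1sub, hxS1, hS1ne, hS1d⟩ := arm_segment (hAe i1) hUo hxU
  have hST : S0 ∩ S1 ⊆ {x} := by
    rw [← hAI i0 i1 hi01]
    exact Set.inter_subset_inter (hS0sub.trans Set.inter_subset_right)
      (hS1sub.trans Set.inter_subset_right)
  have hno_down : ∀ {S : Set X} (w : ℝ),
      w < ((⟨0, by norm_num⟩ : I01) : ℝ) →
      Icc w ((⟨0, by norm_num⟩ : I01) : ℝ) ⊆ Subtype.val '' (f ⁻¹' S) → False := by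
    intro S w hw hI
    obtain ⟨r, -, hrv⟩ := hI (Set.left_mem_Icc.mpr hw.le)
    have h0r : (0:ℝ) ≤ (r:ℝ) := r.2.1
    have hw0 : w < 0 := hw
    rw [hrv] at h0r
    linarith
  have hside : ∀ {S : Set X}, S ⊆ U → IsCompact S → IsPreconnected S → x ∈ S →
      (∃ y ∈ S, y ≠ x) → IsPreconnected (S \ {x}) →
      ∃ w, ((⟨0, by norm_num⟩ : I01) : ℝ) < w ∧
        Icc ((⟨0, by norm_num⟩ : I01) : ℝ) w ⊆ Subtype.val '' (f ⁻¹' S) := by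
    intro S hSU hc hp hxS hne hd
    have hSr : S ⊆ range f := by rw [hfr]; exact hSU.trans hUN
    have := side_interval hfc hfi hSr hc hp (t0 := ⟨0, by norm_num⟩)
      (by rw [hf0]; exact hxS) (by rw [hf0]; exact hd)
      (by obtain ⟨y, hy, hyne⟩ := hne; exact ⟨y, hy, by rw [hf0]; exact hyne⟩)
    rcases this with h | ⟨w, hw, hI⟩
    · exact h
    · exact absurd hI (fun hI => hno_down w hw hI)
  obtain ⟨w0, hw0, hI0⟩ := hside (hS0sub.trans Set.inter_subset_left) hS0c hS0p hxS0 hS0ne hS0d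
  obtain ⟨w1, hw1, hI1⟩ := hside (hS1sub.trans Set.inter_subset_left) hS1c hS1p hxS1 hS1ne hS1d
  exact same_side_up_contra hfi hST hw0 hw1 hI0 hI1

lemma hasOrdIn_two_conflict {x : X} (h1 : HasOrdIn (univ : Set X) x 2) {m : ℕ} (hm : 3 ≤ m)
    (h2 : HasOrdIn (univ : Set X) x m) : False := by
  obtain ⟨N, -, -, ⟨U, hUo, hxU, hUN⟩, hnod⟩ := h1
  rw [Set.inter_univ] at hUN
  obtain ⟨f, hfc, hfi, hfr, hf0⟩ := nod2_param hnod
  obtain ⟨N2, -, -, -, -, A, -, -, hAe, hAI⟩ := h2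
  set i0 : Fin m := ⟨0, by omega⟩
  set i1 : Fin m := ⟨1, by omega⟩
  set i2 : Fin m := ⟨2, by omega⟩
  have harm : ∀ i : Fin m, ∃ S : Set X, IsCompact S ∧ IsPreconnected S ∧ S ⊆ U ∩ A i ∧
      x ∈ S ∧ (∃ y ∈ S, y ≠ x) ∧ IsPreconnected (S \ {x}) :=
    fun i => arm_segment (hAe i) hUo hxU
  obtain ⟨S0, hS0c, hS0p, hS0sub, hxS0, hS0ne, hS0d⟩ := harm i0
  obtain ⟨S1, hS1c, hS1p, hS1sub, hxS1, hS1ne, hS1d⟩ := harm i1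
  obtain ⟨S2, hS2c, hS2p, hS2sub, hxS2, hS2ne, hS2d⟩ := harm i2
  have hST : ∀ {i j : Fin m} {S T : Set X}, i ≠ j → S ⊆ U ∩ A i → T ⊆ U ∩ A j →
      S ∩ T ⊆ {x} := by
    intro i j S T hij hSi hTj
    rw [← hAI i j hij]
    exact Set.inter_subset_inter (hSi.trans Set.inter_subset_right)
      (hTj.trans Set.inter_subset_right)
  have hside : ∀ {S : Set X}, S ⊆ U → IsCompact S → IsPreconnected S → x ∈ S →
      (∃ y ∈ S, y ≠ x) → IsPreconnected (S \ {x}) →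
      (∃ w, ((⟨1/2, by norm_num⟩ : I01) : ℝ) < w ∧
        Icc ((⟨1/2, by norm_num⟩ : I01) : ℝ) w ⊆ Subtype.val '' (f ⁻¹' S)) ∨
      (∃ w, w < ((⟨1/2, by norm_num⟩ : I01) : ℝ) ∧
        Icc w ((⟨1/2, by norm_num⟩ : I01) : ℝ) ⊆ Subtype.val '' (f ⁻¹' S)) := by
    intro S hSU hc hp hxS hne hd
    have hSr : S ⊆ range f := by rw [hfr]; exact hSU.trans hUN
    exact side_interval hfc hfi hSr hc hp (t0 := ⟨1/2, by norm_num⟩)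
      (by rw [hf0]; exact hxS) (by rw [hf0]; exact hd)
      (by obtain ⟨y, hy, hyne⟩ := hne; exact ⟨y, hy, by rw [hf0]; exact hyne⟩)
  have h01 : S0 ∩ S1 ⊆ {x} := hST (by simp [i0, i1, Fin.ext_iff]) hS0sub hS1sub
  have h02 : S0 ∩ S2 ⊆ {x} := hST (by simp [i0, i2, Fin.ext_iff]) hS0sub hS2sub
  have h12 : S1 ∩ S2 ⊆ {x} := hST (by simp [i1, i2, Fin.ext_iff]) hS1sub hS2sub
  have hs0 := hside (hS0sub.trans Set.inter_subset_left) hS0c hS0p hxS0 hS0ne hS0d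
  have hs1 := hside (hS1sub.trans Set.inter_subset_left) hS1c hS1p hxS1 hS1ne hS1d
  have hs2 := hside (hS2sub.trans Set.inter_subset_left) hS2c hS2p hxS2 hS2ne hS2d
  rcases hs0 with ⟨w0, hw0, hI0⟩ | ⟨w0, hw0, hI0⟩ <;>
    rcases hs1 with ⟨w1, hw1, hI1⟩ | ⟨w1, hw1, hI1⟩ <;>
    rcases hs2 with ⟨w2, hw2, hI2⟩ | ⟨w2, hw2, hI2⟩
  · exact same_side_up_contra hfi h01 hw0 hw1 hI0 hI1
  · exact same_side_up_contra hfi h01 hw0 hw1 hI0 hI1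
  · exact same_side_up_contra hfi h02 hw0 hw2 hI0 hI2
  · exact same_side_down_contra hfi h12 hw1 hw2 hI1 hI2
  · exact same_side_up_contra hfi h12 hw1 hw2 hI1 hI2
  · exact same_side_down_contra hfi h02 hw0 hw2 hI0 hI2
  · exact same_side_down_contra hfi h01 hw0 hw1 hI0 hI1
  · exact same_side_down_contra hfi h01 hw0 hw1 hI0 hI1
end Nods

section EdgeOpen

open Metric

set_option linter.unusedSectionVars false

variable {X : Type u} [MetricSpace X]

/-- From the edge and order data, get an oriented parametrization of `lp`
from `p` to an end point of `X`. -/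
lemma edge_struct {lp : Set X} (hlp : IsEdgeIn (univ : Set X) lp) {p : X}
    (hplp : p ∈ lp) (hp : ∃ n, 3 ≤ n ∧ HasOrdIn (univ : Set X) p n)
    (hlpE : (lp ∩ endPtsIn (univ : Set X)).Nonempty) :
    ∃ γ : I01 → X, Continuous γ ∧ Function.Injective γ ∧ range γ = lp ∧
      γ ⟨0, by norm_num⟩ = p ∧ HasOrdIn (univ : Set X) (γ ⟨1, by norm_num⟩) 1 ∧
      ∀ r : I01, 0 < (r:ℝ) → (r:ℝ) < 1 → HasOrdIn (univ : Set X) (γ r) 2 := by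
  obtain ⟨-, a, b, hav, hbv, harc, hvsub⟩ := hlp
  obtain ⟨n, hn3, hpn⟩ := hp
  obtain ⟨e, help, -, he1⟩ := hlpE
  obtain ⟨f, hfc, hfi, hfr, hf0, hf1⟩ := arcFromTo_param harc
  have hpv : ¬ HasOrdIn (univ : Set X) p 2 := fun h => hasOrdIn_two_conflict h hn3 hpn
  have hev : ¬ HasOrdIn (univ : Set X) e 2 := fun h => hasOrdIn_one_conflict he1 le_rfl h
  have hpe : e ≠ p := by
    rintro rfl
    exact hasOrdIn_one_conflict he1 (by omega) hpn
  have hpab : p = a ∨ p = b := by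
    have := hvsub ⟨hplp, Set.mem_univ p, hpv⟩
    simpa using this
  have heab : e = a ∨ e = b := by
    have := hvsub ⟨help, Set.mem_univ e, hev⟩
    simpa using this
  have hcomb : (a = p ∧ b = e) ∨ (a = e ∧ b = p) := by
    rcases hpab with h1 | h1 <;> rcases heab with h2 | h2
    · exact absurd (h2.trans h1.symm) hpe
    · exact Or.inl ⟨h1.symm, h2.symm⟩
    · exact Or.inr ⟨h2.symm, h1.symm⟩
    · exact absurd (h2.trans h1.symm) hpe
  -- midpoint orders, generic in the parametrization
  have hmid : ∀ g : I01 → X, Function.Injective g → range g = lp →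
      g ⟨0, by norm_num⟩ = p → g ⟨1, by norm_num⟩ = e →
      ∀ r : I01, 0 < (r:ℝ) → (r:ℝ) < 1 → HasOrdIn (univ : Set X) (g r) 2 := by
    intro g hgi hgr hg0 hg1 r hr0 hr1
    by_contra hnot
    have hvert : g r ∈ lp ∩ verticesIn (univ : Set X) := by
      refine ⟨by rw [← hgr]; exact Set.mem_range_self r, Set.mem_univ _, hnot⟩
    have hginj0 : g r ≠ p := by
      rw [← hg0]
      intro h
      have h2 : (r:ℝ) = 0 := congrArg Subtype.val (hgi h)
      exact hr0.ne' h2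
    have hginj1 : g r ≠ e := by
      rw [← hg1]
      intro h
      have h2 : (r:ℝ) = 1 := congrArg Subtype.val (hgi h)
      exact hr1.ne h2
    have hmem := hvsub hvert
    simp only [Set.mem_insert_iff, Set.mem_singleton_iff] at hmem
    rcases hcomb with ⟨ha, hb⟩ | ⟨ha, hb⟩ <;> rcases hmem with h | h
    · rw [ha] at h; exact hginj0 h
    · rw [hb] at h; exact hginj1 h
    · rw [ha] at h; exact hginj1 h
    · rw [hb] at h; exact hginj0 h
  rcases hcomb with ⟨ha, hb⟩ | ⟨ha, hb⟩
  · refine ⟨f, hfc, hfi, hfr, by rw [hf0, ha], ?_, ?_⟩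
    · rw [hf1, hb]; exact he1
    · exact hmid f hfi hfr (by rw [hf0, ha]) (by rw [hf1, hb])
  · set ρ : I01 → I01 := fun r => ⟨1 - (r:ℝ), ⟨by linarith [r.2.2], by linarith [r.2.1]⟩⟩ with hρ
    have hρc : Continuous ρ :=
      Continuous.subtype_mk (continuous_const.sub continuous_subtype_val) _
    have hρi : Function.Injective ρ := by
      intro s s' h
      rw [Subtype.ext_iff] at h
      have h2 : (1:ℝ) - (s:ℝ) = 1 - (s':ℝ) := h
      exact Subtype.ext (by linarith)
    have hρsurj : Function.Surjective ρ := by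
      intro s
      exact ⟨ρ s, Subtype.ext (by show (1:ℝ) - (1 - (s:ℝ)) = s; ring)⟩
    set g : I01 → X := f ∘ ρ with hg
    have hgr : range g = lp := by
      rw [hg, Set.range_comp, Set.range_eq_univ.mpr hρsurj, Set.image_univ, hfr]
    have hg0 : g ⟨0, by norm_num⟩ = p := by
      show f (ρ ⟨0, by norm_num⟩) = p
      have hh : ρ ⟨0, by norm_num⟩ = ⟨1, by norm_num⟩ := Subtype.ext (by show (1:ℝ) - 0 = 1; ring)
      rw [hh, hf1, hb]
    have hg1 : g ⟨1, by norm_num⟩ = e := by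
      show f (ρ ⟨1, by norm_num⟩) = e
      have hh : ρ ⟨1, by norm_num⟩ = ⟨0, by norm_num⟩ := Subtype.ext (by show (1:ℝ) - 1 = 0; ring)
      rw [hh, hf0, ha]
    have hgi : Function.Injective g := hfi.comp hρi
    refine ⟨g, hfc.comp hρc, hgi, hgr, hg0, ?_, ?_⟩
    · rw [hg1]; exact he1
    · exact hmid g hgi hgr hg0 hg1

end EdgeOpen

section FreeEdge

open Metric

set_option linter.unusedSectionVars false

variable {X : Type u} [MetricSpace X]

lemma free_edge_open {γ : I01 → X} (hc : Continuous γ) (hinj : Function.Injective γ)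
    (hend : HasOrdIn (univ : Set X) (γ ⟨1, by norm_num⟩) 1)
    (hmid : ∀ r : I01, 0 < (r:ℝ) → (r:ℝ) < 1 → HasOrdIn (univ : Set X) (γ r) 2) :
    IsOpen (range γ \ {γ ⟨0, by norm_num⟩}) := by
  rw [isOpen_iff_forall_mem_open]
  rintro z ⟨⟨r, rfl⟩, hzp⟩
  rw [Set.mem_singleton_iff] at hzp
  have hr0 : 0 < (r:ℝ) := by
    rcases lt_or_eq_of_le r.2.1 with h | h
    · exact h
    · exact absurd (congrArg γ (Subtype.ext h.symm)) hzp
  by_cases hr1 : (r:ℝ) = 1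
  · -- end point case
    have hre : r = ⟨1, by norm_num⟩ := Subtype.ext hr1
    obtain ⟨N, -, -, ⟨U, hUo, hxU, hUN⟩, hnod⟩ := hend
    rw [Set.inter_univ] at hUN
    obtain ⟨f, hfc, hfi, hfr, hf0⟩ := nod1_param hnod
    obtain ⟨δ, hδ, hδU⟩ := exists_delta_image_subset hc hUo (t0 := ⟨1, by norm_num⟩) hxU
    set m := min δ (1/2) with hmdef
    have hm0 : 0 < m := lt_min hδ (by norm_num)
    have hm12 : m ≤ 1/2 := min_le_right _ _
    have hmδ : m ≤ δ := min_le_left _ _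
    set K := γ '' {s : I01 | (s:ℝ) ∈ Ici (1 - m)} with hK
    have hKU : K ⊆ U := by
      rintro y ⟨s, hs, rfl⟩
      apply hδU
      show |(s:ℝ) - 1| ≤ δ
      rw [abs_of_nonpos (by linarith [s.2.2])]
      have : 1 - m ≤ (s:ℝ) := hs
      linarith
    have hKr : K ⊆ range f := by rw [hfr]; exact hKU.trans hUN
    have hKc : IsCompact K := (isCompact_val_mem_of_isClosed isClosed_Ici).image hc
    have hKp : IsPreconnected K := (preconn_val_mem Set.ordConnected_Ici).image _ hc.continuousOn
    have hzK : γ ⟨1, by norm_num⟩ ∈ K :=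
      ⟨⟨1, by norm_num⟩, by show 1 - m ≤ (1:ℝ); linarith, rfl⟩
    have hKne : ∃ y ∈ K, y ≠ γ ⟨1, by norm_num⟩ := by
      refine ⟨γ ⟨1 - m, ⟨by linarith, by linarith⟩⟩,
        ⟨_, by show 1 - m ≤ 1 - m; exact le_rfl, rfl⟩, fun h => ?_⟩
      have h2 : (1:ℝ) - m = 1 := congrArg Subtype.val (hinj h)
      linarith
    have hKd : IsPreconnected (K \ {γ ⟨1, by norm_num⟩}) := by
      have hdom : ({s : I01 | (s:ℝ) ∈ Ici (1 - m)} \ {(⟨1, by norm_num⟩ : I01)}) =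
          {s : I01 | (s:ℝ) ∈ Ico (1 - m) 1} := by
        ext s
        simp only [Set.mem_diff, Set.mem_setOf_eq, Set.mem_Ici, Set.mem_singleton_iff,
          Set.mem_Ico]
        constructor
        · rintro ⟨h1, h2⟩
          refine ⟨h1, ?_⟩
          rcases lt_or_eq_of_le s.2.2 with h | h
          · exact h
          · exact absurd (Subtype.ext h) h2
        · rintro ⟨h1, h2⟩
          refine ⟨h1, fun he => ?_⟩
          rw [he] at h2
          simp at h2
      rw [hK, ← Set.image_singleton (f := γ), ← Set.image_diff hinj, hdom]
      exact (preconn_val_mem Set.ordConnected_Ico).image _ hc.continuousOn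
    have hside := side_interval hfc hfi hKr hKc hKp (t0 := ⟨0, by norm_num⟩)
      (by rw [hf0]; exact hzK) (by rw [hf0]; exact hKd)
      (by obtain ⟨y, hy, hyne⟩ := hKne; exact ⟨y, hy, by rw [hf0]; exact hyne⟩)
    have hno_down : ¬ ∃ w, w < ((⟨0, by norm_num⟩ : I01):ℝ) ∧
        Icc w ((⟨0, by norm_num⟩ : I01):ℝ) ⊆ Subtype.val '' (f ⁻¹' K) := by
      rintro ⟨w, hw, hI⟩
      obtain ⟨s, -, hsv⟩ := hI (Set.left_mem_Icc.mpr hw.le)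
      have := s.2.1
      rw [hsv] at this
      have hw0 : w < 0 := hw
      linarith
    rcases hside with ⟨w, hw, hI⟩ | hdown
    · have hw0 : (0:ℝ) < w := hw
      refine ⟨U \ (f '' {s : I01 | (s:ℝ) ∈ Ici w}), ?_, ?_, ?_⟩
      · rintro y ⟨hyU, hyim⟩
        have hyr : y ∈ range f := by rw [hfr]; exact hUN hyU
        obtain ⟨s, rfl⟩ := hyr
        have hsw : (s:ℝ) < w := by
          by_contra h
          exact hyim ⟨s, not_lt.mp h, rfl⟩
        have hsP : (s:ℝ) ∈ Subtype.val '' (f ⁻¹' K) := hI ⟨s.2.1, hsw.le⟩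
        obtain ⟨s', hs', hsv⟩ := hsP
        rw [Subtype.ext (hsv : (s':ℝ) = (s:ℝ))] at hs'
        have hfsK : f s ∈ K := hs'
        obtain ⟨s'', hs'', hseq⟩ := hfsK
        constructor
        · rw [← hseq]; exact Set.mem_range_self _
        · rw [Set.mem_singleton_iff, ← hseq]
          intro h
          have h2 : (s'':ℝ) = 0 := congrArg Subtype.val (hinj h)
          have h3 : 1 - m ≤ (s'':ℝ) := hs''
          linarith
      · exact hUo.sdiff ((isCompact_val_mem_of_isClosed isClosed_Ici).image hfc).isClosed
      · rw [hre]
        refine ⟨hxU, fun hmem => ?_⟩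
        obtain ⟨s, hs, hseq⟩ := hmem
        rw [← hf0] at hseq
        have h2 : (s:ℝ) = 0 := congrArg Subtype.val (hfi hseq)
        have h3 : w ≤ (s:ℝ) := hs
        linarith
    · exact absurd hdown hno_down
  · -- interior case
    have hρ1 : (r:ℝ) < 1 := lt_of_le_of_ne r.2.2 hr1
    set ρ := (r:ℝ) with hρdef
    obtain ⟨N, -, -, ⟨U, hUo, hxU, hUN⟩, hnod⟩ := hmid r hr0 hρ1
    rw [Set.inter_univ] at hUN
    obtain ⟨f, hfc, hfi, hfr, hf0⟩ := nod2_param hnod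
    obtain ⟨δ, hδ, hδU⟩ := exists_delta_image_subset hc hUo (t0 := r) hxU
    set m := min δ (min (ρ/2) ((1-ρ)/2)) with hmdef
    have hm0 : 0 < m := lt_min hδ (lt_min (by linarith) (by linarith))
    have hmδ : m ≤ δ := min_le_left _ _
    have hmρ : m ≤ ρ/2 := (min_le_right _ _).trans (min_le_left _ _)
    have hmρ' : m ≤ (1-ρ)/2 := (min_le_right _ _).trans (min_le_right _ _)
    have hρm0 : 0 < ρ - m := by linarith
    have hρm1 : ρ + m < 1 := by linarith
    set KP := γ '' {s : I01 | (s:ℝ) ∈ Icc ρ (ρ + m)} with hKP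
    set KM := γ '' {s : I01 | (s:ℝ) ∈ Icc (ρ - m) ρ} with hKM
    have hKPU : KP ⊆ U := by
      rintro y ⟨s, hs, rfl⟩
      apply hδU
      rw [abs_le]
      exact ⟨by linarith [hs.1], by linarith [hs.2]⟩
    have hKMU : KM ⊆ U := by
      rintro y ⟨s, hs, rfl⟩
      apply hδU
      rw [abs_le]
      exact ⟨by linarith [hs.1], by linarith [hs.2]⟩
    have hKPr : KP ⊆ range f := by rw [hfr]; exact hKPU.trans hUN
    have hKMr : KM ⊆ range f := by rw [hfr]; exact hKMU.trans hUN
    have hKPc : IsCompact KP := (isCompact_val_mem_of_isClosed isClosed_Icc).image hc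
    have hKMc : IsCompact KM := (isCompact_val_mem_of_isClosed isClosed_Icc).image hc
    have hKPp : IsPreconnected KP := (preconn_val_mem Set.ordConnected_Icc).image _ hc.continuousOn
    have hKMp : IsPreconnected KM := (preconn_val_mem Set.ordConnected_Icc).image _ hc.continuousOn
    have hzKP : γ r ∈ KP := ⟨r, ⟨le_rfl, by linarith⟩, rfl⟩
    have hzKM : γ r ∈ KM := ⟨r, ⟨by linarith, le_rfl⟩, rfl⟩
    have hKPne : ∃ y ∈ KP, y ≠ γ r := by
      refine ⟨γ ⟨ρ + m, ⟨by linarith, by linarith⟩⟩, ⟨_, ⟨by linarith, le_rfl⟩, rfl⟩, fun h => ?_⟩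
      have h2 : ρ + m = ρ := congrArg Subtype.val (hinj h)
      linarith
    have hKMne : ∃ y ∈ KM, y ≠ γ r := by
      refine ⟨γ ⟨ρ - m, ⟨by linarith, by linarith⟩⟩, ⟨_, ⟨le_rfl, by linarith⟩, rfl⟩, fun h => ?_⟩
      have h2 : ρ - m = ρ := congrArg Subtype.val (hinj h)
      linarith
    have hKPd : IsPreconnected (KP \ {γ r}) := by
      have hdom : ({s : I01 | (s:ℝ) ∈ Icc ρ (ρ + m)} \ {r}) =
          {s : I01 | (s:ℝ) ∈ Ioc ρ (ρ + m)} := by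
        ext s
        simp only [Set.mem_diff, Set.mem_setOf_eq, Set.mem_Icc, Set.mem_singleton_iff,
          Set.mem_Ioc]
        constructor
        · rintro ⟨⟨h1, h2⟩, h3⟩
          refine ⟨?_, h2⟩
          rcases lt_or_eq_of_le h1 with h | h
          · exact h
          · exact absurd (Subtype.ext h.symm) h3
        · rintro ⟨h1, h2⟩
          exact ⟨⟨h1.le, h2⟩, fun he => by rw [he] at h1; exact lt_irrefl _ h1⟩
      rw [hKP, ← Set.image_singleton (f := γ), ← Set.image_diff hinj, hdom]
      exact (preconn_val_mem Set.ordConnected_Ioc).image _ hc.continuousOn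
    have hKMd : IsPreconnected (KM \ {γ r}) := by
      have hdom : ({s : I01 | (s:ℝ) ∈ Icc (ρ - m) ρ} \ {r}) =
          {s : I01 | (s:ℝ) ∈ Ico (ρ - m) ρ} := by
        ext s
        simp only [Set.mem_diff, Set.mem_setOf_eq, Set.mem_Icc, Set.mem_singleton_iff,
          Set.mem_Ico]
        constructor
        · rintro ⟨⟨h1, h2⟩, h3⟩
          refine ⟨h1, ?_⟩
          rcases lt_or_eq_of_le h2 with h | h
          · exact h
          · exact absurd (Subtype.ext h) h3
        · rintro ⟨h1, h2⟩
          exact ⟨⟨h1, h2.le⟩, fun he => by rw [he] at h2; exact lt_irrefl _ h2⟩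
      rw [hKM, ← Set.image_singleton (f := γ), ← Set.image_diff hinj, hdom]
      exact (preconn_val_mem Set.ordConnected_Ico).image _ hc.continuousOn
    have hKK : KP ∩ KM ⊆ {γ r} := by
      rintro y ⟨⟨s, hs, rfl⟩, ⟨s', hs', heq⟩⟩
      have hss : s' = s := hinj heq
      rw [hss] at hs'
      have : (s:ℝ) = ρ := le_antisymm hs'.2 hs.1
      rw [Set.mem_singleton_iff]
      exact congrArg γ (Subtype.ext this)
    have hsideP := side_interval hfc hfi hKPr hKPc hKPp (t0 := ⟨1/2, by norm_num⟩)
      (by rw [hf0]; exact hzKP) (by rw [hf0]; exact hKPd)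
      (by obtain ⟨y, hy, hyne⟩ := hKPne; exact ⟨y, hy, by rw [hf0]; exact hyne⟩)
    have hsideM := side_interval hfc hfi hKMr hKMc hKMp (t0 := ⟨1/2, by norm_num⟩)
      (by rw [hf0]; exact hzKM) (by rw [hf0]; exact hKMd)
      (by obtain ⟨y, hy, hyne⟩ := hKMne; exact ⟨y, hy, by rw [hf0]; exact hyne⟩)
    have hlow : ∀ z ∈ KP ∪ KM, ∃ s : I01, ρ - m ≤ (s:ℝ) ∧ γ s = z := by
      rintro z (⟨s, hs, rfl⟩ | ⟨s, hs, rfl⟩)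
      · exact ⟨s, by linarith [hs.1], rfl⟩
      · exact ⟨s, hs.1, rfl⟩
    have finish : ∀ (KA KB : Set X) (wA wB : ℝ), KA ⊆ U → KB ⊆ U →
        (KA ∪ KB ⊆ KP ∪ KM) →
        wA < 1/2 → (1:ℝ)/2 < wB →
        Icc wA (1/2 : ℝ) ⊆ Subtype.val '' (f ⁻¹' KA) →
        Icc (1/2 : ℝ) wB ⊆ Subtype.val '' (f ⁻¹' KB) →
        ∃ t ⊆ range γ \ {γ ⟨0, by norm_num⟩}, IsOpen t ∧ γ r ∈ t := by
      intro KA KB wA wB hKAU hKBU hKABsub hwA hwB hIA hIB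
      refine ⟨U \ (f '' {s : I01 | (s:ℝ) ∈ Iic wA} ∪ f '' {s : I01 | (s:ℝ) ∈ Ici wB}),
        ?_, ?_, ?_⟩
      · rintro y ⟨hyU, hyim⟩
        have hyr : y ∈ range f := by rw [hfr]; exact hUN hyU
        obtain ⟨s, rfl⟩ := hyr
        have hs1 : wA < (s:ℝ) := by
          by_contra h
          exact hyim (Or.inl ⟨s, not_lt.mp h, rfl⟩)
        have hs2 : (s:ℝ) < wB := by
          by_contra h
          exact hyim (Or.inr ⟨s, not_lt.mp h, rfl⟩)
        have hfsK : f s ∈ KA ∪ KB := by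
          by_cases hhalf : (s:ℝ) ≤ 1/2
          · obtain ⟨s', hs', hsv⟩ := hIA ⟨hs1.le, hhalf⟩
            rw [Subtype.ext (hsv : (s':ℝ) = (s:ℝ))] at hs'
            exact Or.inl hs'
          · obtain ⟨s', hs', hsv⟩ := hIB ⟨(not_le.mp hhalf).le, hs2.le⟩
            rw [Subtype.ext (hsv : (s':ℝ) = (s:ℝ))] at hs'
            exact Or.inr hs'
        obtain ⟨s'', hs'', hseq⟩ := hlow _ (hKABsub hfsK)
        constructor
        · rw [← hseq]; exact Set.mem_range_self _
        · rw [Set.mem_singleton_iff, ← hseq]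
          intro h
          have h2 : (s'':ℝ) = 0 := congrArg Subtype.val (hinj h)
          linarith
      · exact hUo.sdiff (((isCompact_val_mem_of_isClosed isClosed_Iic).image hfc).isClosed.union
          ((isCompact_val_mem_of_isClosed isClosed_Ici).image hfc).isClosed)
      · refine ⟨hxU, fun hmem => ?_⟩
        rcases hmem with ⟨s, hs, hseq⟩ | ⟨s, hs, hseq⟩
        · rw [← hf0] at hseq
          have h2 : (s:ℝ) = 1/2 := congrArg Subtype.val (hfi hseq)
          have h3 : (s:ℝ) ≤ wA := hs
          linarith
        · rw [← hf0] at hseq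
          have h2 : (s:ℝ) = 1/2 := congrArg Subtype.val (hfi hseq)
          have h3 : wB ≤ (s:ℝ) := hs
          linarith
    rcases hsideP with ⟨wP, hwP, hIP⟩ | ⟨wP, hwP, hIP⟩ <;>
      rcases hsideM with ⟨wM, hwM, hIM⟩ | ⟨wM, hwM, hIM⟩
    · exact absurd (same_side_up_contra hfi hKK hwP hwM hIP hIM) id
    · exact finish KM KP wM wP hKMU hKPU (by rw [Set.union_comm]) hwM hwP hIM hIP
    · exact finish KP KM wP wM hKPU hKMU subset_rfl hwP hwM hIP hIM
    · exact absurd (same_side_down_contra hfi hKK hwP hwM hIP hIM) id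

end FreeEdge

section HyperClosed

open Metric EMetric TopologicalSpace

set_option linter.unusedSectionVars false

variable {Z : Type u} [MetricSpace Z]

lemma isClosed_cp_mem (z : Z) : IsClosed {A : NonemptyCompacts Z | z ∈ (A : Set Z)} := by
  have heq : {A : NonemptyCompacts Z | z ∈ (A : Set Z)} =
      (fun A : NonemptyCompacts Z => infDist z (A : Set Z)) ⁻¹' {0} := by
    ext A
    simp only [Set.mem_setOf_eq, Set.mem_preimage, Set.mem_singleton_iff]
    exact ⟨fun h => infDist_zero_of_mem h,
      fun h => (A.isCompact.isClosed.mem_iff_infDist_zero A.nonempty).mpr h⟩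
  rw [heq]
  exact isClosed_singleton.preimage (lipschitz_infDist_set z).continuous

lemma isClosed_cp_preconn : IsClosed {A : NonemptyCompacts Z | IsPreconnected (A : Set Z)} := by
  rw [← isOpen_compl_iff, Metric.isOpen_iff]
  intro A hA
  rw [Set.mem_compl_iff, Set.mem_setOf_eq] at hA
  rw [IsPreconnected] at hA
  push_neg at hA
  obtain ⟨u, v, hu, hv, hcov, hne1, hne2, hdisj⟩ := hA
  set K : Set Z := (A : Set Z) ∩ vᶜ with hKdef
  set M : Set Z := (A : Set Z) ∩ uᶜ with hMdef
  have hKc : IsCompact K := A.isCompact.inter_right hv.isClosed_compl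
  have hMc : IsCompact M := A.isCompact.inter_right hu.isClosed_compl
  have hKne : K.Nonempty := by
    obtain ⟨y, hyA, hyu⟩ := hne1
    exact ⟨y, hyA, fun hyv => Set.eq_empty_iff_forall_notMem.mp hdisj y ⟨hyA, hyu, hyv⟩⟩
  have hMne : M.Nonempty := by
    obtain ⟨y, hyA, hyv⟩ := hne2
    exact ⟨y, hyA, fun hyu => Set.eq_empty_iff_forall_notMem.mp hdisj y ⟨hyA, hyu, hyv⟩⟩
  have hKM : K ∪ M = (A : Set Z) := by
    apply subset_antisymm
    · rintro y (h | h) <;> exact h.1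
    · intro y hy
      rcases hcov hy with h | h
      · by_cases h2 : y ∈ v
        · exact absurd ⟨hy, h, h2⟩ (fun hmem => Set.eq_empty_iff_forall_notMem.mp hdisj y hmem)
        · exact Or.inl ⟨hy, h2⟩
      · by_cases h2 : y ∈ u
        · exact absurd ⟨hy, h2, h⟩ (fun hmem => Set.eq_empty_iff_forall_notMem.mp hdisj y hmem)
        · exact Or.inr ⟨hy, h2⟩
  have hdisjKM : Disjoint K M := by
    rw [Set.disjoint_left]
    rintro y ⟨hyA, hyv⟩ ⟨-, hyu⟩
    rcases hcov hyA with h | h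
    · exact hyu h
    · exact hyv h
  obtain ⟨δ, hδ, hT⟩ := hdisjKM.exists_thickenings hKc hMc.isClosed
  refine ⟨δ, hδ, fun B hB => ?_⟩
  rw [Metric.mem_ball, NonemptyCompacts.dist_eq] at hB
  rw [Set.mem_compl_iff, Set.mem_setOf_eq]
  intro hBconn
  have hfin : EMetric.hausdorffEdist (B : Set Z) (A : Set Z) ≠ ⊤ :=
    hausdorffEdist_ne_top_of_nonempty_of_bounded B.nonempty A.nonempty
      B.isCompact.isBounded A.isCompact.isBounded
  have hBsub : (B : Set Z) ⊆ thickening δ K ∪ thickening δ M := by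
    intro b hb
    have h2 : infDist b (A : Set Z) < δ :=
      lt_of_le_of_lt (infDist_le_hausdorffDist_of_mem hb hfin) hB
    obtain ⟨a, haA, hab⟩ := (infDist_lt_iff A.nonempty).mp h2
    rw [← hKM] at haA
    rcases haA with h | h
    · exact Or.inl (mem_thickening_iff.mpr ⟨a, h, hab⟩)
    · exact Or.inr (mem_thickening_iff.mpr ⟨a, h, hab⟩)
  have hmeet : ∀ y ∈ (A : Set Z), ∃ b ∈ (B : Set Z), dist b y < δ := by
    intro y hy
    have h2 : infDist y (B : Set Z) < δ := by
      have h3 := infDist_le_hausdorffDist_of_mem hy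
        (by rw [EMetric.hausdorffEdist_comm]; exact hfin)
      calc infDist y (B : Set Z) ≤ hausdorffDist (A : Set Z) (B : Set Z) := h3
        _ = hausdorffDist (B : Set Z) (A : Set Z) := hausdorffDist_comm
        _ < δ := hB
    obtain ⟨b, hbB, hyb⟩ := (infDist_lt_iff B.nonempty).mp h2
    exact ⟨b, hbB, by rwa [dist_comm]⟩
  have hBK : ((B : Set Z) ∩ thickening δ K).Nonempty := by
    obtain ⟨k, hk⟩ := hKne
    obtain ⟨b, hbB, hbk⟩ := hmeet k (by rw [← hKM]; exact Or.inl hk)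
    exact ⟨b, hbB, mem_thickening_iff.mpr ⟨k, hk, hbk⟩⟩
  have hBM : ((B : Set Z) ∩ thickening δ M).Nonempty := by
    obtain ⟨k, hk⟩ := hMne
    obtain ⟨b, hbB, hbk⟩ := hmeet k (by rw [← hKM]; exact Or.inr hk)
    exact ⟨b, hbB, mem_thickening_iff.mpr ⟨k, hk, hbk⟩⟩
  obtain ⟨b, -, hbK, hbM⟩ := hBconn _ _ isOpen_thickening isOpen_thickening hBsub hBK hBM
  exact Set.disjoint_left.mp hT hbK hbM

lemma cp_compactSpace [CompactSpace Z] (z : Z) : CompactSpace (CP Z z) := by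
  have hcl : IsClosed {A : NonemptyCompacts Z | IsConnected (A : Set Z) ∧ z ∈ (A : Set Z)} := by
    have heq : {A : NonemptyCompacts Z | IsConnected (A : Set Z) ∧ z ∈ (A : Set Z)} =
        {A : NonemptyCompacts Z | IsPreconnected (A : Set Z)} ∩
          {A : NonemptyCompacts Z | z ∈ (A : Set Z)} := by
      ext A
      simp only [Set.mem_setOf_eq, Set.mem_inter_iff]
      exact ⟨fun h => ⟨h.1.2, h.2⟩, fun h => ⟨⟨A.nonempty, h.1⟩, h.2⟩⟩
    rw [heq]
    exact isClosed_cp_preconn.inter (isClosed_cp_mem z)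
  exact isCompact_iff_compactSpace.mp hcl.isCompact

end HyperClosed

section Decomp

open Metric EMetric TopologicalSpace

set_option linter.unusedSectionVars false
set_option maxHeartbeats 1000000

lemma decomp_homeo {Z : Type u} [MetricSpace Z] [CompactSpace Z] {p : Z} {lp : Set Z}
    {γ : I01 → Z} (hγc : Continuous γ) (hγi : Function.Injective γ) (hγr : range γ = lp)
    (hγ0 : γ ⟨0, by norm_num⟩ = p) (hopen : IsOpen (lp \ {p}))
    (hmem : p ∈ ((univ \ lp) ∪ {p} : Set Z)) :
    Nonempty ((CP (↥((univ \ lp) ∪ {p} : Set Z)) ⟨p, hmem⟩ × I01) ≃ₜ CP Z p) := by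
  subst hγr
  set X' : Set Z := (univ \ range γ) ∪ {p} with hX'def
  have hX'c : IsClosed X' := by
    have heq : X' = (range γ \ {p})ᶜ := by
      ext z
      simp only [hX'def, Set.mem_union, Set.mem_diff, Set.mem_univ, true_and,
        Set.mem_singleton_iff, Set.mem_compl_iff]
      tauto
    rw [heq]
    exact hopen.isClosed_compl
  have hX'cpt : IsCompact X' := hX'c.isCompact
  haveI : CompactSpace (↥X') := isCompact_iff_compactSpace.mp hX'cpt
  haveI : CompactSpace (CP (↥X') ⟨p, hmem⟩) := cp_compactSpace _
  have hX'L : ∀ z, z ∈ X' → z ∈ range γ → z = p := by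
    intro z hz hzL
    rcases hz with hz | hz
    · exact absurd hzL hz.2
    · exact hz
  have hpX' : p ∈ X' := Or.inr rfl
  have hBsub : ∀ (C : CP (↥X') ⟨p, hmem⟩), Subtype.val '' (C.1 : Set ↥X') ⊆ X' := by
    rintro C z ⟨w, -, rfl⟩
    exact w.2
  -- the underlying set of the image
  have hcpt : ∀ (B : CP (↥X') ⟨p, hmem⟩) (t : I01),
      IsCompact (Subtype.val '' (B.1 : Set ↥X') ∪ γ '' {s : I01 | (s:ℝ) ≤ (t:ℝ)}) :=
    fun B t => (B.1.isCompact.image continuous_subtype_val).union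
      ((isCompact_val_mem_of_isClosed isClosed_Iic).image hγc)
  have hmemp : ∀ (B : CP (↥X') ⟨p, hmem⟩) (t : I01),
      p ∈ Subtype.val '' (B.1 : Set ↥X') ∪ γ '' {s : I01 | (s:ℝ) ≤ (t:ℝ)} :=
    fun B t => Or.inl ⟨⟨p, hmem⟩, B.2.2, rfl⟩
  have hconn : ∀ (B : CP (↥X') ⟨p, hmem⟩) (t : I01),
      IsConnected (Subtype.val '' (B.1 : Set ↥X') ∪ γ '' {s : I01 | (s:ℝ) ≤ (t:ℝ)}) := by
    intro B t
    apply IsConnected.union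
    · exact ⟨p, ⟨⟨p, hmem⟩, B.2.2, rfl⟩, ⟨⟨0, by norm_num⟩, t.2.1, hγ0⟩⟩
    · exact B.2.1.image _ continuous_subtype_val.continuousOn
    · exact ⟨⟨p, ⟨⟨0, by norm_num⟩, t.2.1, hγ0⟩⟩,
        (preconn_val_mem Set.ordConnected_Iic).image _ hγc.continuousOn⟩
  set ΦF : CP (↥X') ⟨p, hmem⟩ × I01 → CP Z p := fun Bt =>
    ⟨⟨⟨Subtype.val '' (Bt.1.1 : Set ↥X') ∪ γ '' {s : I01 | (s:ℝ) ≤ (Bt.2:ℝ)},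
       hcpt Bt.1 Bt.2⟩, ⟨p, hmemp Bt.1 Bt.2⟩⟩, hconn Bt.1 Bt.2, hmemp Bt.1 Bt.2⟩ with hΦF
  -- injectivity
  have hinj : Function.Injective ΦF := by
    rintro ⟨B, t⟩ ⟨B', t'⟩ h
    have hset : Subtype.val '' (B.1 : Set ↥X') ∪ γ '' {s : I01 | (s:ℝ) ≤ (t:ℝ)} =
        Subtype.val '' (B'.1 : Set ↥X') ∪ γ '' {s : I01 | (s:ℝ) ≤ (t':ℝ)} :=
      congrArg (fun A : CP Z p => (A.1 : Set Z)) h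
    have hint : ∀ (C : CP (↥X') ⟨p, hmem⟩) (u : I01),
        (Subtype.val '' (C.1 : Set ↥X') ∪ γ '' {s : I01 | (s:ℝ) ≤ (u:ℝ)}) ∩ X'
          = Subtype.val '' (C.1 : Set ↥X') := by
      intro C u
      apply subset_antisymm
      · rintro z ⟨hz1 | hz1, hz2⟩
        · exact hz1
        · obtain ⟨s, -, rfl⟩ := hz1
          have hzp : γ s = p := hX'L _ hz2 (Set.mem_range_self s)
          rw [hzp]
          exact ⟨⟨p, hmem⟩, C.2.2, rfl⟩
      · intro z hz
        exact ⟨Or.inl hz, hBsub C hz⟩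
    have hBB : B = B' := by
      have h2 : Subtype.val '' (B.1 : Set ↥X') = Subtype.val '' (B'.1 : Set ↥X') := by
        rw [← hint B t, ← hint B' t', hset]
      have h3 : (B.1 : Set ↥X') = (B'.1 : Set ↥X') :=
        Set.image_injective.mpr Subtype.val_injective h2
      exact Subtype.ext (NonemptyCompacts.ext h3)
    have hkey : ∀ (C C' : CP (↥X') ⟨p, hmem⟩) (u u' : I01),
        (Subtype.val '' (C.1 : Set ↥X') ∪ γ '' {s : I01 | (s:ℝ) ≤ (u:ℝ)}) =
        (Subtype.val '' (C'.1 : Set ↥X') ∪ γ '' {s : I01 | (s:ℝ) ≤ (u':ℝ)}) →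
        (u:ℝ) ≤ (u':ℝ) := by
      intro C C' u u' hEq
      have hu : γ u ∈ Subtype.val '' (C.1 : Set ↥X') ∪ γ '' {s : I01 | (s:ℝ) ≤ (u:ℝ)} :=
        Or.inr ⟨u, show (u:ℝ) ≤ (u:ℝ) from le_rfl, rfl⟩
      rw [hEq] at hu
      rcases hu with hu | hu
      · have hzp : γ u = p := hX'L _ (hBsub C' hu) (Set.mem_range_self u)
        have h0 : u = ⟨0, by norm_num⟩ := hγi (hzp.trans hγ0.symm)
        rw [h0]
        exact u'.2.1
      · obtain ⟨s, hs, hsu⟩ := hu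
        have hss : s = u := hγi hsu
        rw [hss] at hs
        exact hs
    have htt : t = t' := Subtype.ext (le_antisymm (hkey B B' t t' hset) (hkey B' B t' t hset.symm))
    rw [Prod.mk.injEq]
    exact ⟨hBB, htt⟩
  -- surjectivity
  have hsurj : Function.Surjective ΦF := by
    rintro ⟨A, hAconn, hpA⟩
    set Kset : Set I01 := γ ⁻¹' (A : Set Z) with hKsetdef
    have hKcl : IsClosed Kset := A.isCompact.isClosed.preimage hγc
    set K' : Set ℝ := Subtype.val '' Kset with hK'def
    have hK'cpt : IsCompact K' := hKcl.isCompact.image continuous_subtype_val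
    have h0K : (0:ℝ) ∈ K' := ⟨⟨0, by norm_num⟩, by
      show γ _ ∈ (A : Set Z); rw [hγ0]; exact hpA, rfl⟩
    have hK'ne : K'.Nonempty := ⟨0, h0K⟩
    set T : ℝ := sSup K' with hTdef
    have hTK : T ∈ K' := hK'cpt.isClosed.csSup_mem hK'ne hK'cpt.bddAbove
    obtain ⟨rT, hrT, hrTv⟩ := hTK
    have hT0 : 0 ≤ T := le_csSup hK'cpt.bddAbove h0K
    have hT1 : T ≤ 1 := by rw [← hrTv]; exact rT.2.2
    have hdown : ∀ s : ℝ, 0 ≤ s → s ≤ T → s ∈ K' := by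
      intro s hs0 hsT
      by_contra hsK
      have hs0' : s ≠ 0 := fun h => hsK (by rw [h]; exact h0K)
      have hsT' : s ≠ T := fun h => hsK (by rw [h]; exact ⟨rT, hrT, hrTv⟩)
      have hs0lt : 0 < s := lt_of_le_of_ne hs0 (Ne.symm hs0')
      have hsTlt : s < T := lt_of_le_of_ne hsT hsT'
      set s1 : I01 := ⟨s, hs0, hsT.trans hT1⟩ with hs1def
      have hs1A : γ s1 ∉ (A : Set Z) := fun h => hsK ⟨s1, h, rfl⟩
      set O1 : Set Z := (γ '' {r : I01 | (r:ℝ) ∈ Ici s})ᶜ with hO1def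
      set O2 : Set Z := (range γ \ {p}) ∩ (γ '' {r : I01 | (r:ℝ) ∈ Iic s})ᶜ with hO2def
      have hO1o : IsOpen O1 :=
        ((isCompact_val_mem_of_isClosed isClosed_Ici).image hγc).isClosed.isOpen_compl
      have hO2o : IsOpen O2 := hopen.inter
        ((isCompact_val_mem_of_isClosed isClosed_Iic).image hγc).isClosed.isOpen_compl
      have hcov : (A : Set Z) ⊆ O1 ∪ O2 := by
        intro z hz
        by_cases hzO1 : z ∈ O1
        · exact Or.inl hzO1
        · rw [hO1def, Set.mem_compl_iff, not_not] at hzO1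
          obtain ⟨r, hr, rfl⟩ := hzO1
          have hrs : s ≤ (r:ℝ) := hr
          have hrne : (r:ℝ) ≠ s := by
            intro heq
            exact hs1A (by rw [← show r = s1 from Subtype.ext heq]; exact hz)
          refine Or.inr ⟨⟨Set.mem_range_self r, ?_⟩, ?_⟩
          · rw [Set.mem_singleton_iff]
            intro heq
            have h0 : r = ⟨0, by norm_num⟩ := hγi (heq.trans hγ0.symm)
            rw [h0] at hrs
            have : s ≤ (0:ℝ) := hrs
            linarith
          · rintro ⟨r', hr', heq⟩
            have hrr : r' = r := hγi heq
            rw [hrr] at hr'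
            have : (r:ℝ) ≤ s := hr'
            exact hrne (le_antisymm this hrs)
      have hdisj : ∀ z, z ∈ O1 → z ∈ O2 → False := by
        intro z h1 h2
        obtain ⟨r, rfl⟩ := h2.1.1
        apply h1
        rcases le_total s (r:ℝ) with h | h
        · exact ⟨r, h, rfl⟩
        · exact absurd ⟨r, h, rfl⟩ h2.2
      have hpO1 : p ∈ (A : Set Z) ∩ O1 := by
        refine ⟨hpA, ?_⟩
        rw [hO1def, Set.mem_compl_iff]
        rintro ⟨r, hr, hrp⟩
        have h0 : r = ⟨0, by norm_num⟩ := hγi (hrp.trans hγ0.symm)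
        rw [h0] at hr
        have : s ≤ (0:ℝ) := hr
        linarith
      have hTO2 : γ rT ∈ (A : Set Z) ∩ O2 := by
        refine ⟨hrT, ⟨Set.mem_range_self rT, ?_⟩, ?_⟩
        · rw [Set.mem_singleton_iff]
          intro heq
          have h0 : rT = ⟨0, by norm_num⟩ := hγi (heq.trans hγ0.symm)
          rw [h0] at hrTv
          have : (0:ℝ) = T := hrTv
          linarith
        · rintro ⟨r', hr', heq⟩
          have hrr : r' = rT := hγi heq
          rw [hrr] at hr'
          have : (rT:ℝ) ≤ s := hr'
          rw [hrTv] at this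
          linarith
      obtain ⟨z, -, hz1, hz2⟩ := hAconn.2 O1 O2 hO1o hO2o hcov ⟨p, hpO1⟩ ⟨γ rT, hTO2⟩
      exact hdisj z hz1 hz2
    have hAL : (A : Set Z) ∩ range γ = γ '' {r : I01 | (r:ℝ) ≤ T} := by
      apply subset_antisymm
      · rintro z ⟨hzA, r, rfl⟩
        exact ⟨r, le_csSup hK'cpt.bddAbove ⟨r, hzA, rfl⟩, rfl⟩
      · rintro z ⟨r, hr, rfl⟩
        obtain ⟨r', hr', hrv⟩ := hdown (r:ℝ) r.2.1 hr
        rw [show r' = r from Subtype.ext hrv] at hr'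
        exact ⟨hr', Set.mem_range_self r⟩
    set Bset : Set Z := (A : Set Z) ∩ X' with hBsetdef
    have hBcpt : IsCompact Bset := A.isCompact.inter_right hX'c
    have hpB : p ∈ Bset := ⟨hpA, hpX'⟩
    have hBcl : IsClosed Bset := hBcpt.isClosed
    have hunivsplit : X' ∪ range γ = univ := by
      ext z
      simp only [Set.mem_union, hX'def, Set.mem_diff, Set.mem_univ, true_and,
        Set.mem_singleton_iff, iff_true]
      tauto
    have hAsplit : (A : Set Z) = Bset ∪ γ '' {r : I01 | (r:ℝ) ≤ T} := by
      rw [← hAL, hBsetdef, ← Set.inter_union_distrib_left, hunivsplit, Set.inter_univ]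
    have hBconn : IsPreconnected Bset := by
      rw [isPreconnected_iff_subset_of_fully_disjoint_closed hBcl]
      have key : ∀ u v : Set Z, IsClosed u → IsClosed v → Bset ⊆ u ∪ v → Disjoint u v →
          p ∈ u → Bset ⊆ u := by
        intro u v hu hv hcov huv hpu
        set G : Set Z := γ '' {r : I01 | (r:ℝ) ≤ T} with hGdef
        have hGcl : IsClosed G :=
          ((isCompact_val_mem_of_isClosed isClosed_Iic).image hγc).isClosed
        have hGX' : ∀ z ∈ G, z ∈ X' → z = p := by
          rintro z ⟨r, -, rfl⟩ hz
          exact hX'L _ hz (Set.mem_range_self r)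
        have hAcov : (A : Set Z) ⊆ (u ∩ Bset ∪ G) ∪ v ∩ Bset := by
          intro z hz
          rw [hAsplit] at hz
          rcases hz with hz | hz
          · rcases hcov hz with h | h
            · exact Or.inl (Or.inl ⟨h, hz⟩)
            · exact Or.inr ⟨h, hz⟩
          · exact Or.inl (Or.inr hz)
        have hdisj2 : Disjoint (u ∩ Bset ∪ G) (v ∩ Bset) := by
          rw [Set.disjoint_left]
          rintro z (⟨hzu, -⟩ | hzG) ⟨hzv, hzB⟩
          · exact Set.disjoint_left.mp huv hzu hzv
          · have hzp : z = p := hGX' z hzG hzB.2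
            rw [hzp] at hzv
            exact Set.disjoint_left.mp huv hpu hzv
        have hres := (isPreconnected_iff_subset_of_fully_disjoint_closed
          A.isCompact.isClosed).mp hAconn.2 (u ∩ Bset ∪ G) (v ∩ Bset)
          ((hu.inter hBcl).union hGcl) (hv.inter hBcl) hAcov hdisj2
        rcases hres with h | h
        · intro z hz
          rcases h (by rw [hAsplit]; exact Or.inl hz) with h2 | h2
          · exact h2.1
          · have hzp : z = p := hGX' z h2 hz.2
            rw [hzp]
            exact hpu
        · exfalso
          have := h hpA
          exact Set.disjoint_left.mp huv hpu this.1
      intro u v hu hv hcov huv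
      rcases hcov hpB with h | h
      · exact Or.inl (key u v hu hv hcov huv h)
      · exact Or.inr (key v u hv hu (by rwa [Set.union_comm]) huv.symm h)
    have hBsubX' : Bset ⊆ X' := Set.inter_subset_right
    set Bpre : Set ↥X' := Subtype.val ⁻¹' Bset with hBpredef
    have hBpre_cl : IsClosed Bpre := hBcl.preimage continuous_subtype_val
    have hBpre_cpt : IsCompact Bpre := hBpre_cl.isCompact
    have hBpre_img : Subtype.val '' Bpre = Bset := by
      apply subset_antisymm
      · rintro z ⟨w, hw, rfl⟩
        exact hw
      · intro z hz
        exact ⟨⟨z, hBsubX' hz⟩, hz, rfl⟩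
    have hBpre_conn : IsPreconnected Bpre := by
      have hh := (Topology.IsInducing.subtypeVal (t := X')).isPreconnected_image (s := Bpre)
      exact hh.mp (by rw [hBpre_img]; exact hBconn)
    refine ⟨(⟨⟨⟨Bpre, hBpre_cpt⟩, ⟨⟨p, hmem⟩, hpB⟩⟩, ⟨⟨⟨p, hmem⟩, hpB⟩, hBpre_conn⟩, hpB⟩,
      ⟨T, hT0, hT1⟩), ?_⟩
    apply Subtype.ext
    apply NonemptyCompacts.ext
    show Subtype.val '' Bpre ∪ γ '' {s : I01 | (s:ℝ) ≤ T} = (A : Set Z)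
    rw [hBpre_img, ← hAsplit]
  -- continuity
  have hcont : Continuous ΦF := by
    rw [Metric.continuous_iff]
    rintro ⟨B, t⟩ ε hε
    obtain ⟨δ1, hδ1, hδ1p⟩ := Metric.uniformContinuous_iff.mp
      (CompactSpace.uniformContinuous_of_continuous hγc) (ε/2) (by positivity)
    refine ⟨min δ1 (ε/2), lt_min hδ1 (by positivity), ?_⟩
    rintro ⟨B', t'⟩ hd
    rw [Prod.dist_eq] at hd
    have hdB : dist B' B < ε/2 :=
      lt_of_le_of_lt (le_max_left _ (dist t' t)) (hd.trans_le (min_le_right _ _))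
    have hdt : dist t' t < δ1 :=
      lt_of_le_of_lt (le_max_right (dist B' B) _) (hd.trans_le (min_le_left _ _))
    have hpair : ∀ (C C' : CP (↥X') ⟨p, hmem⟩) (u u' : I01), dist C C' < ε/2 →
        dist u u' < δ1 →
        ∀ x ∈ Subtype.val '' (C.1 : Set ↥X') ∪ γ '' {s : I01 | (s:ℝ) ≤ (u:ℝ)},
          ∃ y ∈ Subtype.val '' (C'.1 : Set ↥X') ∪ γ '' {s : I01 | (s:ℝ) ≤ (u':ℝ)},
            dist x y ≤ ε/2 := by
      intro C C' u u' hCC huu x hx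
      rcases hx with ⟨w, hw, rfl⟩ | ⟨s, hs, rfl⟩
      · have hfin : EMetric.hausdorffEdist (C.1 : Set ↥X') (C'.1 : Set ↥X') ≠ ⊤ :=
          hausdorffEdist_ne_top_of_nonempty_of_bounded C.1.nonempty C'.1.nonempty
            C.1.isCompact.isBounded C'.1.isCompact.isBounded
        have h1 : infDist w (C'.1 : Set ↥X') < ε/2 := by
          refine lt_of_le_of_lt (infDist_le_hausdorffDist_of_mem hw hfin) ?_
          rw [show dist C C' = dist C.1 C'.1 from rfl, NonemptyCompacts.dist_eq] at hCC
          exact hCC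
        obtain ⟨y0, hy0, hy0d⟩ := (infDist_lt_iff C'.1.nonempty).mp h1
        refine ⟨y0.val, Or.inl ⟨y0, hy0, rfl⟩, ?_⟩
        have heq : dist w.val y0.val = dist w y0 := (Subtype.dist_eq w y0).symm
        rw [heq]
        exact hy0d.le
      · by_cases hst : (s:ℝ) ≤ (u':ℝ)
        · exact ⟨γ s, Or.inr ⟨s, hst, rfl⟩, by rw [dist_self]; positivity⟩
        · push_neg at hst
          refine ⟨γ u', Or.inr ⟨u', show (u':ℝ) ≤ (u':ℝ) from le_rfl, rfl⟩, ?_⟩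
          have hd2 : dist s u' < δ1 := by
            rw [Subtype.dist_eq, Real.dist_eq]
            rw [Subtype.dist_eq, Real.dist_eq] at huu
            have h3 : (s:ℝ) ≤ (u:ℝ) := hs
            have h4 : |(u:ℝ) - (u':ℝ)| < δ1 := huu
            rw [abs_of_pos (by linarith : (0:ℝ) < (s:ℝ) - (u':ℝ))]
            calc (s:ℝ) - (u':ℝ) ≤ (u:ℝ) - (u':ℝ) := by linarith
              _ ≤ |(u:ℝ) - (u':ℝ)| := le_abs_self _
              _ < δ1 := h4
          exact (hδ1p hd2).le
    show dist (ΦF (B', t')) (ΦF (B, t)) < ε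
    have hbound : dist (ΦF (B', t')) (ΦF (B, t)) ≤ ε/2 := by
      rw [show dist (ΦF (B', t')) (ΦF (B, t)) = dist (ΦF (B', t')).1 (ΦF (B, t)).1 from rfl,
        NonemptyCompacts.dist_eq]
      apply hausdorffDist_le_of_mem_dist (by positivity)
      · exact hpair B' B t' t hdB hdt
      · exact hpair B B' t t' (by rwa [dist_comm]) (by rwa [dist_comm])
    linarith
  exact ⟨Continuous.homeoOfEquivCompactToT2 (f := Equiv.ofBijective ΦF ⟨hinj, hsurj⟩) hcont⟩

end Decomp

theorem statement17 {X Y : Type u} [MetricSpace X] [MetricSpace Y]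
    (hX : IsTree X) (hY : IsTree Y)
    (p : X) (hp : p ∈ ramifIn (univ : Set X)) (q : Y) (hq : q ∈ ramifIn (univ : Set Y))
    (lp : Set X) (hlp : IsEdgeIn (univ : Set X) lp) (hplp : p ∈ lp)
    (hlpE : (lp ∩ endPtsIn (univ : Set X)).Nonempty)
    (lq : Set Y) (hlq : IsEdgeIn (univ : Set Y) lq) (hqlq : q ∈ lq)
    (hlqE : (lq ∩ endPtsIn (univ : Set Y)).Nonempty)
    (hh : Nonempty
      (CP (↥((univ \ lp) ∪ {p} : Set X)) (⟨p, by simp⟩ : ↥((univ \ lp) ∪ {p} : Set X)) ≃ₜ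
       CP (↥((univ \ lq) ∪ {q} : Set Y)) (⟨q, by simp⟩ : ↥((univ \ lq) ∪ {q} : Set Y)))) :
    Nonempty (CP X p ≃ₜ CP Y q) := by
  obtain ⟨F⟩ := hh
  haveI : CompactSpace X := hX.1.1
  haveI : CompactSpace Y := hY.1.1
  obtain ⟨γX, hcX, hiX, hrX, h0X, hendX, hmidX⟩ := edge_struct hlp hplp hp.2 hlpE
  have hopenX : IsOpen (lp \ {p}) := by
    have h := free_edge_open hcX hiX hendX hmidX
    rwa [hrX, h0X] at h
  obtain ⟨γY, hcY, hiY, hrY, h0Y, hendY, hmidY⟩ := edge_struct hlq hqlq hq.2 hlqE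
  have hopenY : IsOpen (lq \ {q}) := by
    have h := free_edge_open hcY hiY hendY hmidY
    rwa [hrY, h0Y] at h
  obtain ⟨HX⟩ := decomp_homeo hcX hiX hrX h0X hopenX (by simp)
  obtain ⟨HY⟩ := decomp_homeo hcY hiY hrY h0Y hopenY (by simp)
  exact ⟨HX.symm.trans ((F.prodCongr (Homeomorph.refl _)).trans HY)⟩
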